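/- arXiv:2509.03076 — 2 statements merged into one kernel-verified Lean document; each statement's English description precedes it below -/
import Mathlib

section
/- Let f be a holomorphic self-map of the unit disk D. Then there exist a holomorphic map h : D → D and a sequence of automorphisms γ_n of D such that γ_n^{-1} ∘ f^n converges to h uniformly on compact subsets of D. -/
open Complex Metric Filter Set

/-- Inverse hyperbolic tangent. -/
noncomputable def artanh (t : ℝ) : ℝ := (1/2) * Real.log ((1 + t) / (1 - t))

/-- Poincaré distance on the unit disk. -/
noncomputable def pd (z w : ℂ) : ℝ :=
  artanh ‖(w - z) / (1 - (starRingEnd ℂ) z * w)‖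

/-- Holomorphic self-map of the unit disk. -/
def HolSelfDisk (f : ℂ → ℂ) : Prop :=
  DifferentiableOn ℂ f (ball (0:ℂ) 1) ∧ MapsTo f (ball (0:ℂ) 1) (ball (0:ℂ) 1)

/-- A pair of maps that are mutually inverse holomorphic self-maps of the disk,
i.e. an automorphism of the disk together with its inverse. -/
def IsDiskAutPair (γ γinv : ℂ → ℂ) : Prop :=
  HolSelfDisk γ ∧ HolSelfDisk γinv ∧
  (∀ z ∈ ball (0:ℂ) 1, γinv (γ z) = z) ∧ (∀ z ∈ ball (0:ℂ) 1, γ (γinv z) = z)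

/-!
Let `a n = f^[n] 0` and let `diskMobius a` be the disk automorphism `z ↦ (z + a) / (1 + ā z)`.
Then `diskMobius (-a n) ∘ f^[n]` is the forward composition `g (n-1) ∘ ⋯ ∘ g 0` of the self-maps
`g k = diskMobius (-a (k+1)) ∘ f ∘ diskMobius (a k)`, which fix `0`; after conjugating by
rotations, their multipliers `s k = g k '(0)` are real and lie in `[0, 1]`.

If `∑ (1 - s k) = ∞`, the sharp Schwarz lemma `|g z| ≤ |z| (s + |z|) / (1 + s |z|)` forces the
compositions to `0` locally uniformly. If `∑ (1 - s k) < ∞`, the Schwarz–Pick lemma applied to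
`g z / z` shows that a self-map fixing `0` with real multiplier `t` moves each point of
`|z| ≤ r` by at most `3 (1 - t) / (1 - r)`; the multiplier of `g (m-1) ∘ ⋯ ∘ g n` is
`∏ s k ≥ 1 - ∑_{k ≥ n} (1 - s k)`, so the compositions are uniformly Cauchy on compacts.
-/

open ComplexConjugate Topology

noncomputable def diskMobius (a z : ℂ) : ℂ := (z + a) / (1 + conj a * z)

section DiskMobius

variable {a z : ℂ}

lemma normSq_one_add_conj_mul_sub_normSq_add (a z : ℂ) :
    normSq (1 + conj a * z) - normSq (z + a) = (1 - normSq a) * (1 - normSq z) := by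
  simp only [normSq_apply, add_re, add_im, mul_re, mul_im, one_re, one_im, conj_re, conj_im]
  ring

lemma one_add_conj_mul_ne_zero (ha : ‖a‖ < 1) (hz : ‖z‖ ≤ 1) : 1 + conj a * z ≠ 0 := by
  intro h
  have : ‖conj a * z‖ = 1 := by rw [eq_neg_of_add_eq_zero_right h, norm_neg, norm_one]
  rw [norm_mul, RCLike.norm_conj] at this
  nlinarith [norm_nonneg a, norm_nonneg z]

lemma norm_diskMobius_lt_one (ha : ‖a‖ < 1) (hz : ‖z‖ < 1) : ‖diskMobius a z‖ < 1 := by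
  have hden := one_add_conj_mul_ne_zero ha hz.le
  have hkey := normSq_one_add_conj_mul_sub_normSq_add a z
  have hpos : 0 < (1 - normSq a) * (1 - normSq z) := by
    rw [← Complex.sq_norm, ← Complex.sq_norm]
    exact mul_pos (by nlinarith [norm_nonneg a]) (by nlinarith [norm_nonneg z])
  rw [diskMobius, norm_div, div_lt_one (norm_pos_iff.mpr hden), ← sq_lt_sq₀ (norm_nonneg _)
    (norm_nonneg _), Complex.sq_norm, Complex.sq_norm]
  linarith

lemma diskMobius_neg_diskMobius (ha : ‖a‖ < 1) (hz : ‖z‖ ≤ 1) :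
    diskMobius (-a) (diskMobius a z) = z := by
  have hden := one_add_conj_mul_ne_zero ha hz
  have ha' : 1 - conj a * a ≠ 0 := by
    intro h
    have : ‖conj a * a‖ = 1 := by rw [← sub_eq_zero.mp h, norm_one]
    rw [norm_mul, RCLike.norm_conj] at this
    nlinarith [norm_nonneg a]
  have hu : (z + a) / (1 + conj a * z) * (1 + conj a * z) = z + a := div_mul_cancel₀ _ hden
  have e1 : (z + a) / (1 + conj a * z) + -a = z * (1 - conj a * a) / (1 + conj a * z) := by
    rw [eq_div_iff hden]; linear_combination hu
  have e2 :
      1 + conj (-a) * ((z + a) / (1 + conj a * z)) = (1 - conj a * a) / (1 + conj a * z) := by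
    rw [eq_div_iff hden, map_neg]; linear_combination -(conj a) * hu
  rw [diskMobius, diskMobius, e1, e2, div_div_div_cancel_right₀ hden, mul_div_cancel_right₀ _ ha']

lemma diskMobius_diskMobius_neg (ha : ‖a‖ < 1) (hz : ‖z‖ ≤ 1) :
    diskMobius a (diskMobius (-a) z) = z := by
  simpa using diskMobius_neg_diskMobius (a := -a) (by rwa [norm_neg]) hz

@[simp] lemma diskMobius_zero_left (z : ℂ) : diskMobius 0 z = z := by simp [diskMobius]

@[simp] lemma diskMobius_zero_right (a : ℂ) : diskMobius a 0 = a := by simp [diskMobius]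

@[simp] lemma diskMobius_neg_self (a : ℂ) : diskMobius (-a) a = 0 := by simp [diskMobius]

lemma diskMobius_neg_apply (a z : ℂ) : diskMobius (-a) z = (z - a) / (1 - conj a * z) := by
  simp [diskMobius, sub_eq_add_neg]

lemma holSelfDisk_diskMobius (ha : ‖a‖ < 1) : HolSelfDisk (diskMobius a) := by
  refine ⟨fun z hz => ?_, fun z hz => ?_⟩
  · have hz : ‖z‖ ≤ 1 := (mem_ball_zero_iff.mp hz).le
    exact ((differentiableAt_id.add_const a).div ((differentiableAt_id.const_mul _).const_add 1)
      (one_add_conj_mul_ne_zero ha hz)).differentiableWithinAt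
  · exact mem_ball_zero_iff.mpr (norm_diskMobius_lt_one ha (mem_ball_zero_iff.mp hz))

end DiskMobius

lemma holSelfDisk_id : HolSelfDisk id := ⟨differentiableOn_id, mapsTo_id _⟩

lemma holSelfDisk_const_mul {c : ℂ} (hc : ‖c‖ ≤ 1) : HolSelfDisk (c * ·) := by
  refine ⟨(differentiable_id.const_mul c).differentiableOn, fun z hz => ?_⟩
  rw [mem_ball_zero_iff, norm_mul] at *
  nlinarith [norm_nonneg c, norm_nonneg z]

namespace HolSelfDisk

variable {g h : ℂ → ℂ} {z : ℂ}

lemma comp (hg : HolSelfDisk g) (hh : HolSelfDisk h) : HolSelfDisk (g ∘ h) :=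
  ⟨hg.1.comp hh.1 hh.2, hg.2.comp hh.2⟩

lemma iterate (hg : HolSelfDisk g) (n : ℕ) : HolSelfDisk g^[n] := by
  induction n with
  | zero => exact holSelfDisk_id
  | succ n ih => rw [Function.iterate_succ']; exact hg.comp ih

lemma differentiableAt (hg : HolSelfDisk g) (hz : z ∈ ball (0 : ℂ) 1) : DifferentiableAt ℂ g z :=
  hg.1.differentiableAt (isOpen_ball.mem_nhds hz)

lemma norm_le_norm (hg : HolSelfDisk g) (h0 : g 0 = 0) (hz : z ∈ ball (0 : ℂ) 1) :
    ‖g z‖ ≤ ‖z‖ :=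
  Complex.norm_le_norm_of_mapsTo_ball hg.1 (hg.2.mono_right ball_subset_closedBall) h0
    (mem_ball_zero_iff.mp hz)

lemma norm_deriv_le_one (hg : HolSelfDisk g) (h0 : g 0 = 0) : ‖deriv g 0‖ ≤ 1 :=
  Complex.norm_deriv_le_one_of_mapsTo_ball hg.1
    (by rw [h0]; exact hg.2.mono_right ball_subset_closedBall) one_pos

lemma norm_sub_le (hg : HolSelfDisk g) (hz : z ∈ ball (0 : ℂ) 1) :
    ‖g z - g 0‖ ≤ ‖z‖ * ‖1 - conj (g 0) * g z‖ := by
  have hg0 : ‖g 0‖ < 1 := mem_ball_zero_iff.mp (hg.2 (mem_ball_self one_pos))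
  have hgz : ‖g z‖ < 1 := mem_ball_zero_iff.mp (hg.2 hz)
  have hφ : HolSelfDisk (diskMobius (-g 0) ∘ g) :=
    (holSelfDisk_diskMobius (by rwa [norm_neg])).comp hg
  have hden : 1 - conj (g 0) * g z ≠ 0 := by
    simpa [sub_eq_add_neg] using one_add_conj_mul_ne_zero (a := -g 0) (by rwa [norm_neg]) hgz.le
  have := hφ.norm_le_norm (by simp) hz
  rwa [Function.comp_apply, diskMobius_neg_apply, norm_div, div_le_iff₀ (norm_pos_iff.mpr hden)]
    at this

end HolSelfDisk

lemma norm_mul_one_add_le_of_norm_sub_le {w c : ℂ} {m r : ℝ} (hc : ‖c‖ ≤ 1) (hw : ‖w‖ ≤ 1)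
    (hm : 0 ≤ m) (hmr : m ≤ r) (hr : r ≤ 1) (h : ‖w - c‖ ≤ m * ‖1 - conj c * w‖) :
    ‖w‖ * (1 + ‖c‖ * r) ≤ ‖c‖ + r := by
  set x := ‖w‖
  set β := ‖c‖
  set R := (conj c * w).re
  have hR : R ≤ β * x := by
    calc R ≤ ‖conj c * w‖ := re_le_norm _
      _ = β * x := by rw [norm_mul, RCLike.norm_conj]
  have hsq : x ^ 2 - 2 * R + β ^ 2 ≤ m ^ 2 * (1 - 2 * R + β ^ 2 * x ^ 2) := by
    have e1 : ‖w - c‖ ^ 2 = x ^ 2 - 2 * R + β ^ 2 := by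
      simp only [x, β, R, Complex.sq_norm, normSq_apply, sub_re, sub_im, mul_re, conj_re, conj_im]
      ring
    have e2 : ‖1 - conj c * w‖ ^ 2 = 1 - 2 * R + β ^ 2 * x ^ 2 := by
      simp only [x, β, R, Complex.sq_norm, normSq_apply, sub_re, sub_im, mul_re, mul_im, conj_re,
        conj_im, one_re, one_im]
      ring
    rw [← e1, ← e2, ← mul_pow]
    exact pow_le_pow_left₀ (norm_nonneg _) h 2
  have hx0 : 0 ≤ x := norm_nonneg w
  have hβ0 : 0 ≤ β := norm_nonneg c
  have hxβ : x * β ≤ 1 := by nlinarith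
  -- the squared inequality factors as `(x(1+mβ) - (β+m)) (x(1-mβ) - (β-m)) ≤ 0`
  have hprod : (x * (1 + m * β) - (β + m)) * (x * (1 - m * β) - (β - m)) ≤ 0 := by
    nlinarith [mul_nonneg (by nlinarith : (0:ℝ) ≤ 1 - m ^ 2) (by linarith : 0 ≤ β * x - R)]
  have hsharp : x * (1 + β * m) ≤ β + m := by
    nlinarith [mul_nonneg hm (by linarith : 0 ≤ 1 - x * β)]
  nlinarith [mul_nonneg (mul_nonneg hx0 hβ0) (by linarith : 0 ≤ r - m)]

lemma norm_sub_one_mul_le_of_norm_sub_le {w : ℂ} {t m r : ℝ} (ht0 : 0 ≤ t) (ht1 : t ≤ 1)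
    (hm : 0 ≤ m) (hmr : m ≤ r) (hr : r ≤ 1) (h : ‖w - t‖ ≤ m * ‖1 - t * w‖) :
    ‖w - 1‖ * (1 - r) ≤ 3 * (1 - t) := by
  set X := ‖w - t‖
  have hX0 : 0 ≤ X := norm_nonneg _
  have hsplit : ‖1 - t * w‖ ≤ (1 - t ^ 2) + t * X := by
    calc ‖1 - t * w‖ = ‖((1 - t ^ 2 : ℝ) : ℂ) + t * (t - w)‖ := by push_cast; ring_nf
      _ ≤ ‖((1 - t ^ 2 : ℝ) : ℂ)‖ + ‖(t : ℂ) * (t - w)‖ := norm_add_le _ _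
      _ = (1 - t ^ 2) + t * X := by
        rw [norm_mul, norm_sub_rev, Complex.norm_real, Complex.norm_real, Real.norm_of_nonneg ht0,
          Real.norm_of_nonneg (by nlinarith)]
  have hX : X * (1 - r) ≤ 2 * (1 - t) := by
    nlinarith [mul_le_mul_of_nonneg_left hsplit hm, mul_nonneg hX0 (by nlinarith : 0 ≤ r - m * t),
      mul_nonneg (by nlinarith : 0 ≤ 2 - m * (1 + t)) (by linarith : 0 ≤ 1 - t)]
  have hw1 : ‖w - 1‖ ≤ X + (1 - t) := by
    calc ‖w - 1‖ = ‖(w - t) + ((t - 1 : ℝ) : ℂ)‖ := by push_cast; ring_nf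
      _ ≤ X + ‖((t - 1 : ℝ) : ℂ)‖ := norm_add_le _ _
      _ = X + (1 - t) := by rw [Complex.norm_real, Real.norm_of_nonpos (by linarith)]; ring
  nlinarith [mul_le_mul_of_nonneg_right hw1 (by linarith : 0 ≤ 1 - r)]

lemma norm_sub_le_of_norm_le_one {q : ℂ → ℂ} {z : ℂ} (hd : DifferentiableOn ℂ q (ball 0 1))
    (hq : ∀ w ∈ ball (0 : ℂ) 1, ‖q w‖ ≤ 1) (hz : z ∈ ball (0 : ℂ) 1) :
    ‖q z - q 0‖ ≤ ‖z‖ * ‖1 - conj (q 0) * q z‖ := by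
  by_cases hmax : ∃ w ∈ ball (0 : ℂ) 1, ‖q w‖ = 1
  · obtain ⟨w, hw, hw1⟩ := hmax
    have hconst := Complex.eqOn_of_isPreconnected_of_isMaxOn_norm (convex_ball 0 1).isPreconnected
      isOpen_ball hd hw (fun x hx => by simpa [hw1] using hq x hx)
    rw [hconst hz, hconst (mem_ball_self one_pos), Function.const_apply, Function.const_apply,
      sub_self, norm_zero]
    positivity
  · push Not at hmax
    refine HolSelfDisk.norm_sub_le ⟨hd, fun w hw => ?_⟩ hz
    exact mem_ball_zero_iff.mpr ((hq w hw).lt_of_ne (hmax w hw))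

namespace HolSelfDisk

variable {g : ℂ → ℂ} {z : ℂ}

lemma apply_eq_mul_dslope (h0 : g 0 = 0) (z : ℂ) : g z = z * dslope g 0 z := by
  simpa [h0] using (sub_smul_dslope g 0 z).symm

lemma norm_dslope_le_one (hg : HolSelfDisk g) (h0 : g 0 = 0) (hz : z ∈ ball (0 : ℂ) 1) :
    ‖dslope g 0 z‖ ≤ 1 := by
  simpa using Complex.norm_dslope_le_div_of_mapsTo_ball hg.1
    (by rw [h0]; exact hg.2.mono_right ball_subset_closedBall) hz

lemma norm_dslope_sub_deriv_le (hg : HolSelfDisk g) (h0 : g 0 = 0) (hz : z ∈ ball (0 : ℂ) 1) :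
    ‖dslope g 0 z - deriv g 0‖ ≤ ‖z‖ * ‖1 - conj (deriv g 0) * dslope g 0 z‖ := by
  rw [← dslope_same]
  exact norm_sub_le_of_norm_le_one
    ((differentiableOn_dslope (isOpen_ball.mem_nhds (mem_ball_self one_pos))).mpr hg.1)
    (fun w hw => hg.norm_dslope_le_one h0 hw) hz

lemma norm_mul_one_add_le (hg : HolSelfDisk g) (h0 : g 0 = 0) (hz : z ∈ ball (0 : ℂ) 1)
    {r : ℝ} (hzr : ‖z‖ ≤ r) (hr : r ≤ 1) :
    ‖g z‖ * (1 + ‖deriv g 0‖ * r) ≤ (‖deriv g 0‖ + r) * ‖z‖ := by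
  have key := norm_mul_one_add_le_of_norm_sub_le (hg.norm_deriv_le_one h0)
    (hg.norm_dslope_le_one h0 hz) (norm_nonneg z) hzr hr (hg.norm_dslope_sub_deriv_le h0 hz)
  rw [apply_eq_mul_dslope h0, norm_mul]
  nlinarith [norm_nonneg z]

lemma norm_sub_self_mul_le (hg : HolSelfDisk g) (h0 : g 0 = 0) {t : ℝ} (ht : deriv g 0 = t)
    (ht0 : 0 ≤ t) (hz : z ∈ ball (0 : ℂ) 1) {r : ℝ} (hzr : ‖z‖ ≤ r) (hr : r ≤ 1) :
    ‖g z - z‖ * (1 - r) ≤ 3 * (1 - t) := by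
  have ht1 : t ≤ 1 := by
    simpa [ht, Real.norm_of_nonneg ht0] using hg.norm_deriv_le_one h0
  have key := norm_sub_one_mul_le_of_norm_sub_le ht0 ht1 (norm_nonneg z) hzr hr
    (by simpa [ht] using hg.norm_dslope_sub_deriv_le h0 hz)
  have e : g z - z = z * (dslope g 0 z - 1) := by rw [apply_eq_mul_dslope h0]; ring
  rw [e, norm_mul]
  nlinarith [norm_nonneg (dslope g 0 z - 1), norm_nonneg z]

end HolSelfDisk

open Finset in
lemma one_sub_prod_le_sum_one_sub {ι : Type*} (s : Finset ι) {u : ι → ℝ} (h0 : ∀ i ∈ s, 0 ≤ u i)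
    (h1 : ∀ i ∈ s, u i ≤ 1) : 1 - ∏ i ∈ s, u i ≤ ∑ i ∈ s, (1 - u i) := by
  classical
  induction s using Finset.induction_on with
  | empty => simp
  | insert a s ha ih =>
    rw [prod_insert ha, sum_insert ha]
    have hP0 : 0 ≤ ∏ i ∈ s, u i := prod_nonneg fun i hi => h0 i (mem_insert_of_mem hi)
    have hP1 : ∏ i ∈ s, u i ≤ 1 :=
      prod_le_one (fun i hi => h0 i (mem_insert_of_mem hi)) fun i hi => h1 i (mem_insert_of_mem hi)
    have := ih (fun i hi => h0 i (mem_insert_of_mem hi)) fun i hi => h1 i (mem_insert_of_mem hi)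
    nlinarith [h0 a (mem_insert_self a s), h1 a (mem_insert_self a s)]

open Finset in
lemma tendsto_prod_range_zero_of_not_summable {u : ℕ → ℝ} (h0 : ∀ i, 0 ≤ u i) (h1 : ∀ i, u i ≤ 1)
    (hu : ¬Summable fun i => 1 - u i) : Tendsto (fun n => ∏ i ∈ range n, u i) atTop (𝓝 0) := by
  have hsum : Tendsto (fun n => ∑ i ∈ range n, (1 - u i)) atTop atTop :=
    (not_summable_iff_tendsto_nat_atTop_of_nonneg fun i => sub_nonneg.mpr (h1 i)).mp hu
  refine squeeze_zero (fun n => prod_nonneg fun i _ => h0 i) (fun n => ?_)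
    (Real.tendsto_exp_atBot.comp (tendsto_neg_atTop_atBot.comp hsum))
  calc ∏ i ∈ range n, u i ≤ ∏ i ∈ range n, Real.exp (-(1 - u i)) :=
        prod_le_prod (fun i _ => h0 i) fun i _ => by linarith [Real.add_one_le_exp (-(1 - u i))]
    _ = Real.exp (-∑ i ∈ range n, (1 - u i)) := by rw [← Real.exp_sum, sum_neg_distrib]

lemma tendstoUniformlyOn_limUnder_of_dist_le {α β : Type*} [PseudoMetricSpace β]
    [CompleteSpace β] [Nonempty β] {F : ℕ → α → β} {K : Set α} {e : ℕ → ℝ}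
    (he : Tendsto e atTop (𝓝 0))
    (hF : ∀ n m, n ≤ m → ∀ z ∈ K, dist (F n z) (F m z) ≤ e n) :
    TendstoUniformlyOn F (fun z => limUnder atTop fun n => F n z) atTop K := by
  rw [Metric.tendstoUniformlyOn_iff]
  intro ε hε
  filter_upwards [he.eventually (gt_mem_nhds hε)] with n hn z hz
  have hlim : Tendsto (fun m => F m z) atTop (𝓝 (limUnder atTop fun m => F m z)) :=
    (cauchySeq_of_le_tendsto_0' e (fun n m hnm => hF n m hnm z hz) he).tendsto_limUnder
  have hle : dist (limUnder atTop fun m => F m z) (F n z) ≤ e n := by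
    rw [dist_comm]
    exact le_of_tendsto (tendsto_const_nhds.dist hlim)
      (eventually_atTop.mpr ⟨n, fun m hm => hF n m hm z hz⟩)
  exact hle.trans_lt hn

lemma tendstoLocallyUniformlyOn_ball_of_closedBall {ι E β : Type*} [MetricSpace E]
    [ProperSpace E] [UniformSpace β] {p : Filter ι} {F : ι → E → β} {h : E → β} {x : E} {R : ℝ}
    (hF : ∀ r, 0 ≤ r → r < R → TendstoUniformlyOn F h p (closedBall x r)) :
    TendstoLocallyUniformlyOn F h p (ball x R) := by
  rw [tendstoLocallyUniformlyOn_iff_forall_isCompact isOpen_ball]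
  intro K hKR hK
  rcases K.eq_empty_or_nonempty with rfl | ⟨z, hz⟩
  · exact tendstoUniformlyOn_empty
  obtain ⟨r, hrR, hKr⟩ := exists_lt_subset_ball hK.isClosed hKR
  exact (hF r (dist_nonneg.trans (hKr hz).le) hrR).mono (hKr.trans ball_subset_closedBall)

def forwardComp {α : Type*} (g : ℕ → α → α) : ℕ → α → α
  | 0 => id
  | n + 1 => g n ∘ forwardComp g n

section ForwardComp

variable {α : Type*} {g : ℕ → α → α}

@[simp] lemma forwardComp_zero (g : ℕ → α → α) : forwardComp g 0 = id := rfl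

lemma forwardComp_succ (g : ℕ → α → α) (n : ℕ) : forwardComp g (n + 1) = g n ∘ forwardComp g n :=
  rfl

lemma forwardComp_add (g : ℕ → α → α) (n k : ℕ) :
    forwardComp g (n + k) = forwardComp (fun i => g (n + i)) k ∘ forwardComp g n := by
  induction k with
  | zero => rfl
  | succ k ih => rw [← add_assoc, forwardComp_succ, ih, forwardComp_succ, Function.comp_assoc]

lemma forwardComp_apply_of_forall_eq {a : α} (ha : ∀ n, g n a = a) (n : ℕ) :
    forwardComp g n a = a := by
  induction n with
  | zero => rfl
  | succ n ih => rw [forwardComp_succ, Function.comp_apply, ih, ha]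

end ForwardComp

lemma hasDerivAt_forwardComp {𝕜 : Type*} [NontriviallyNormedField 𝕜] {g : ℕ → 𝕜 → 𝕜} {a : 𝕜}
    (ha : ∀ n, g n a = a) (hd : ∀ n, DifferentiableAt 𝕜 (g n) a) (n : ℕ) :
    HasDerivAt (forwardComp g n) (∏ i ∈ Finset.range n, deriv (g i) a) a := by
  induction n with
  | zero => simpa using hasDerivAt_id a
  | succ n ih =>
    rw [Finset.prod_range_succ, mul_comm, forwardComp_succ]
    have hgn : HasDerivAt (g n) (deriv (g n) a) (forwardComp g n a) := by
      rw [forwardComp_apply_of_forall_eq ha]; exact (hd n).hasDerivAt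
    exact hgn.comp a ih

lemma holSelfDisk_forwardComp {g : ℕ → ℂ → ℂ} (hg : ∀ n, HolSelfDisk (g n)) (n : ℕ) :
    HolSelfDisk (forwardComp g n) := by
  induction n with
  | zero => exact holSelfDisk_id
  | succ n ih => exact (hg n).comp ih

lemma HolSelfDisk.of_tendstoLocallyUniformlyOn {F : ℕ → ℂ → ℂ} {h : ℂ → ℂ}
    (hF : ∀ n, HolSelfDisk (F n)) (hF0 : ∀ n, F n 0 = 0)
    (hlim : TendstoLocallyUniformlyOn F h atTop (ball 0 1)) : HolSelfDisk h := by
  refine ⟨hlim.differentiableOn (Eventually.of_forall fun n => (hF n).1) isOpen_ball,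
    fun z hz => mem_ball_zero_iff.mpr ?_⟩
  have hle : ‖h z‖ ≤ ‖z‖ := le_of_tendsto (hlim.tendsto_at hz).norm
    (Eventually.of_forall fun n => (hF n).norm_le_norm (hF0 n) hz)
  exact hle.trans_lt (mem_ball_zero_iff.mp hz)

section ForwardCompConvergence

variable {g : ℕ → ℂ → ℂ}

lemma norm_forwardComp_le_prod (hg : ∀ n, HolSelfDisk (g n)) (h0 : ∀ n, g n 0 = 0) {r : ℝ}
    (hr0 : 0 ≤ r) (hr1 : r < 1) (n : ℕ) {z : ℂ} (hz : ‖z‖ ≤ r) :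
    ‖forwardComp g n z‖ ≤
      r * ∏ i ∈ Finset.range n, (‖deriv (g i) 0‖ + r) / (1 + ‖deriv (g i) 0‖ * r) := by
  have hzb : z ∈ ball (0 : ℂ) 1 := mem_ball_zero_iff.mpr (hz.trans_lt hr1)
  induction n with
  | zero => simpa using hz
  | succ n ih =>
    set s := ‖deriv (g n) 0‖
    set w := forwardComp g n z
    have hw : w ∈ ball (0 : ℂ) 1 := (holSelfDisk_forwardComp hg n).2 hzb
    have hwr : ‖w‖ ≤ r := ((holSelfDisk_forwardComp hg n).norm_le_norm
      (forwardComp_apply_of_forall_eq h0 n) hzb).trans hz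
    have hden : 0 < 1 + s * r := by positivity
    have hstep : ‖g n w‖ ≤ (s + r) / (1 + s * r) * ‖w‖ := by
      rw [div_mul_eq_mul_div, le_div_iff₀ hden]
      linarith [(hg n).norm_mul_one_add_le (h0 n) hw hwr hr1.le]
    rw [forwardComp_succ, Function.comp_apply, Finset.prod_range_succ]
    calc ‖g n w‖ ≤ (s + r) / (1 + s * r) * ‖w‖ := hstep
      _ ≤ (s + r) / (1 + s * r) * (r * ∏ i ∈ Finset.range n, (‖deriv (g i) 0‖ + r) /
            (1 + ‖deriv (g i) 0‖ * r)) := by gcongr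
      _ = _ := by ring

lemma tendstoLocallyUniformlyOn_forwardComp_zero (hg : ∀ n, HolSelfDisk (g n))
    (h0 : ∀ n, g n 0 = 0) (hs : ¬Summable fun n => 1 - ‖deriv (g n) 0‖) :
    TendstoLocallyUniformlyOn (forwardComp g) 0 atTop (ball 0 1) := by
  refine tendstoLocallyUniformlyOn_ball_of_closedBall fun r hr0 hr1 => ?_
  set s := fun n => ‖deriv (g n) 0‖
  have hs1 : ∀ n, s n ≤ 1 := fun n => (hg n).norm_deriv_le_one (h0 n)
  set u := fun n => (s n + r) / (1 + s n * r)
  have hden : ∀ n, 0 < 1 + s n * r := fun n => by positivity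
  have hu_eq : ∀ n, 1 - u n = (1 - s n) * (1 - r) / (1 + s n * r) := fun n => by
    rw [one_sub_div (hden n).ne']; ring
  have hu1 : ∀ n, (1 - r) / 2 * (1 - s n) ≤ 1 - u n := fun n => by
    have : 0 ≤ (1 - s n) * (1 - r) * (1 - s n * r) :=
      mul_nonneg (mul_nonneg (sub_nonneg.mpr (hs1 n)) (by linarith)) (by nlinarith [hs1 n])
    rw [hu_eq, le_div_iff₀ (hden n)]
    nlinarith
  have hu_le : ∀ n, u n ≤ 1 := fun n => by
    have : 0 ≤ (1 - r) / 2 * (1 - s n) := mul_nonneg (by linarith) (sub_nonneg.mpr (hs1 n))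
    linarith [hu1 n]
  have hu_ns : ¬Summable fun n => 1 - u n := fun hsum => hs <|
    (hsum.mul_left (2 / (1 - r))).of_nonneg_of_le (fun n => sub_nonneg.mpr (hs1 n)) fun n => by
      rw [div_mul_eq_mul_div, le_div_iff₀ (by linarith)]
      linarith [hu1 n]
  have hprod : Tendsto (fun n => r * ∏ i ∈ Finset.range n, u i) atTop (𝓝 0) := by
    simpa using (tendsto_prod_range_zero_of_not_summable (fun n => by positivity) hu_le
      hu_ns).const_mul r
  rw [Metric.tendstoUniformlyOn_iff]
  intro ε hε
  filter_upwards [hprod.eventually (gt_mem_nhds hε)] with n hn z hz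
  rw [Pi.zero_apply, dist_zero_left]
  exact (norm_forwardComp_le_prod hg h0 hr0 hr1 n (mem_closedBall_zero_iff.mp hz)).trans_lt hn

lemma deriv_forwardComp (hg : ∀ n, HolSelfDisk (g n)) (h0 : ∀ n, g n 0 = 0) (n : ℕ) :
    deriv (forwardComp g n) 0 = ∏ i ∈ Finset.range n, deriv (g i) 0 :=
  (hasDerivAt_forwardComp h0 (fun n => (hg n).differentiableAt (mem_ball_self one_pos)) n).deriv

/-- With real nonnegative multipliers `s n`, the tail `forwardComp (g (n + ·)) k` has derivative
`∏ s` at `0`, so by Schwarz–Pick it stays within `O(∑ (1 - s))` of the identity: the sequence is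
uniformly Cauchy on compacts. -/
lemma tendstoLocallyUniformlyOn_forwardComp_limUnder (hg : ∀ n, HolSelfDisk (g n))
    (h0 : ∀ n, g n 0 = 0) {s : ℕ → ℝ} (hs : ∀ n, deriv (g n) 0 = s n) (hs0 : ∀ n, 0 ≤ s n)
    (hsum : Summable fun n => 1 - s n) :
    TendstoLocallyUniformlyOn (forwardComp g)
      (fun z => limUnder atTop fun n => forwardComp g n z) atTop (ball 0 1) := by
  refine tendstoLocallyUniformlyOn_ball_of_closedBall fun r hr0 hr1 => ?_
  have hs1 : ∀ n, s n ≤ 1 := fun n => by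
    simpa [hs, Real.norm_of_nonneg (hs0 n)] using (hg n).norm_deriv_le_one (h0 n)
  set T := fun n => ∑' i, (1 - s (i + n))
  refine tendstoUniformlyOn_limUnder_of_dist_le (e := fun n => 3 * T n / (1 - r)) ?_ ?_
  · simpa using ((tendsto_sum_nat_add fun i => 1 - s i).const_mul 3).div_const (1 - r)
  intro n m hnm z hz
  obtain ⟨k, rfl⟩ := Nat.exists_eq_add_of_le hnm
  have hzb : z ∈ ball (0 : ℂ) 1 :=
    mem_ball_zero_iff.mpr ((mem_closedBall_zero_iff.mp hz).trans_lt hr1)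
  set w := forwardComp g n z
  set G := forwardComp (fun i => g (n + i)) k
  set t := ∏ i ∈ Finset.range k, s (n + i)
  have hG : HolSelfDisk G := holSelfDisk_forwardComp (fun i => hg (n + i)) k
  have hG0 : G 0 = 0 := forwardComp_apply_of_forall_eq (fun i => h0 (n + i)) k
  have hGt : deriv G 0 = t := by
    rw [deriv_forwardComp (fun i => hg (n + i)) (fun i => h0 (n + i))]
    simp only [hs, t, Complex.ofReal_prod]
  have hwr : ‖w‖ ≤ r := ((holSelfDisk_forwardComp hg n).norm_le_norm
    (forwardComp_apply_of_forall_eq h0 n) hzb).trans (mem_closedBall_zero_iff.mp hz)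
  have hclose := hG.norm_sub_self_mul_le hG0 hGt (Finset.prod_nonneg fun i _ => hs0 (n + i))
    ((holSelfDisk_forwardComp hg n).2 hzb) hwr hr1.le
  have ht : 1 - t ≤ T n := by
    refine (one_sub_prod_le_sum_one_sub _ (fun i _ => hs0 (n + i))
      fun i _ => hs1 (n + i)).trans ?_
    simp_rw [add_comm n]
    exact ((summable_nat_add_iff n).mpr hsum).sum_le_tsum _ fun i _ => sub_nonneg.mpr (hs1 _)
  rw [forwardComp_add, Function.comp_apply, dist_comm, dist_eq_norm, le_div_iff₀ (by linarith)]
  linarith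

lemma exists_tendstoLocallyUniformlyOn_forwardComp (hg : ∀ n, HolSelfDisk (g n))
    (h0 : ∀ n, g n 0 = 0) {s : ℕ → ℝ} (hs : ∀ n, deriv (g n) 0 = s n) (hs0 : ∀ n, 0 ≤ s n) :
    ∃ h, HolSelfDisk h ∧ TendstoLocallyUniformlyOn (forwardComp g) h atTop (ball 0 1) := by
  have hlim : ∃ h, TendstoLocallyUniformlyOn (forwardComp g) h atTop (ball 0 1) := by
    by_cases hsum : Summable fun n => 1 - s n
    · exact ⟨_, tendstoLocallyUniformlyOn_forwardComp_limUnder hg h0 hs hs0 hsum⟩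
    · refine ⟨0, tendstoLocallyUniformlyOn_forwardComp_zero hg h0 ?_⟩
      simpa [hs, Real.norm_of_nonneg (hs0 _)] using hsum
  obtain ⟨h, hh⟩ := hlim
  exact ⟨h, .of_tendstoLocallyUniformlyOn (holSelfDisk_forwardComp hg)
    (forwardComp_apply_of_forall_eq h0) hh, hh⟩

noncomputable def phase (g : ℕ → ℂ → ℂ) (n : ℕ) : ℂ :=
  ∏ i ∈ Finset.range n, exp (-(arg (deriv (g i) 0)) * I)

noncomputable def phaseCorrected (g : ℕ → ℂ → ℂ) (n : ℕ) (w : ℂ) : ℂ :=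
  phase g (n + 1) * g n ((phase g n)⁻¹ * w)

lemma norm_phase (g : ℕ → ℂ → ℂ) (n : ℕ) : ‖phase g n‖ = 1 := by
  simp only [phase, norm_prod]
  exact Finset.prod_eq_one fun i _ => by exact_mod_cast norm_exp_ofReal_mul_I _

lemma phase_ne_zero (g : ℕ → ℂ → ℂ) (n : ℕ) : phase g n ≠ 0 :=
  norm_ne_zero_iff.mp (by rw [norm_phase]; exact one_ne_zero)

lemma forwardComp_phaseCorrected (g : ℕ → ℂ → ℂ) (n : ℕ) (z : ℂ) :
    forwardComp (phaseCorrected g) n z = phase g n * forwardComp g n z := by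
  induction n with
  | zero => simp [phase]
  | succ n ih =>
    rw [forwardComp_succ, Function.comp_apply, ih, phaseCorrected,
      inv_mul_cancel_left₀ (phase_ne_zero g n), forwardComp_succ, Function.comp_apply]

lemma holSelfDisk_phaseCorrected (hg : ∀ n, HolSelfDisk (g n)) (n : ℕ) :
    HolSelfDisk (phaseCorrected g n) :=
  (holSelfDisk_const_mul (norm_phase g (n + 1)).le).comp
    ((hg n).comp (holSelfDisk_const_mul (by rw [norm_inv, norm_phase, inv_one])))

lemma phaseCorrected_zero (h0 : ∀ n, g n 0 = 0) (n : ℕ) : phaseCorrected g n 0 = 0 := by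
  simp [phaseCorrected, h0]

lemma deriv_phaseCorrected (hg : ∀ n, HolSelfDisk (g n)) (n : ℕ) :
    deriv (phaseCorrected g n) 0 = ‖deriv (g n) 0‖ := by
  set c := deriv (g n) 0
  have hd : HasDerivAt (g n) c ((phase g n)⁻¹ * 0) := by
    rw [mul_zero]; exact ((hg n).differentiableAt (mem_ball_self one_pos)).hasDerivAt
  have hφ : HasDerivAt (phaseCorrected g n) (phase g (n + 1) * (c * ((phase g n)⁻¹ * 1))) 0 :=
    (hd.comp 0 ((hasDerivAt_id 0).const_mul (phase g n)⁻¹)).const_mul (phase g (n + 1))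
  have hpolar : ‖c‖ * exp (arg c * I) = c := norm_mul_exp_arg_mul_I c
  have hexp : exp (-arg c * I) * exp (arg c * I) = 1 := by
    rw [← Complex.exp_add, neg_mul, neg_add_cancel, Complex.exp_zero]
  rw [hφ.deriv, phase, Finset.prod_range_succ, ← phase]
  linear_combination (exp (-arg c * I) * c) * mul_inv_cancel₀ (phase_ne_zero g n)
    - exp (-arg c * I) * hpolar + ‖c‖ * hexp

theorem exists_rotation_tendstoLocallyUniformlyOn_forwardComp (hg : ∀ n, HolSelfDisk (g n))
    (h0 : ∀ n, g n 0 = 0) :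
    ∃ (ρ : ℕ → ℂ) (h : ℂ → ℂ), (∀ n, ‖ρ n‖ = 1) ∧ HolSelfDisk h ∧
      TendstoLocallyUniformlyOn (fun n z => ρ n * forwardComp g n z) h atTop (ball 0 1) := by
  obtain ⟨h, hh, hlim⟩ := exists_tendstoLocallyUniformlyOn_forwardComp
    (holSelfDisk_phaseCorrected hg) (phaseCorrected_zero h0) (deriv_phaseCorrected hg)
    fun n => norm_nonneg _
  refine ⟨phase g, h, norm_phase g, hh, ?_⟩
  simpa only [← forwardComp_phaseCorrected] using hlim

end ForwardCompConvergence

lemma isDiskAutPair_diskMobius {a ρ : ℂ} (ha : ‖a‖ < 1) (hρ : ‖ρ‖ = 1) :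
    IsDiskAutPair (fun z => diskMobius a (ρ⁻¹ * z)) (fun w => ρ * diskMobius (-a) w) := by
  have hρ0 : ρ ≠ 0 := norm_ne_zero_iff.mp (by rw [hρ]; exact one_ne_zero)
  have hρinv : ‖ρ⁻¹‖ = 1 := by rw [norm_inv, hρ, inv_one]
  refine ⟨(holSelfDisk_diskMobius ha).comp (holSelfDisk_const_mul hρinv.le),
    (holSelfDisk_const_mul hρ.le).comp (holSelfDisk_diskMobius (by rwa [norm_neg])),
    fun z hz => ?_, fun w hw => ?_⟩
  · have hz' : ‖ρ⁻¹ * z‖ ≤ 1 := by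
      rw [norm_mul, hρinv, one_mul]; exact (mem_ball_zero_iff.mp hz).le
    simp only [diskMobius_neg_diskMobius ha hz', mul_inv_cancel_left₀ hρ0]
  · simp only [inv_mul_cancel_left₀ hρ0,
      diskMobius_diskMobius_neg ha (mem_ball_zero_iff.mp hw).le]

section Recentering

variable {f : ℂ → ℂ}

noncomputable def recenteredStep (f : ℂ → ℂ) (n : ℕ) : ℂ → ℂ :=
  diskMobius (-f^[n + 1] 0) ∘ f ∘ diskMobius (f^[n] 0)

lemma norm_iterate_apply_zero_lt_one (hf : HolSelfDisk f) (n : ℕ) : ‖f^[n] 0‖ < 1 :=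
  mem_ball_zero_iff.mp ((hf.iterate n).2 (mem_ball_self one_pos))

lemma HolSelfDisk.recenteredStep (hf : HolSelfDisk f) (n : ℕ) :
    HolSelfDisk (recenteredStep f n) :=
  (holSelfDisk_diskMobius (by rw [norm_neg]; exact norm_iterate_apply_zero_lt_one hf _)).comp
    (hf.comp (holSelfDisk_diskMobius (norm_iterate_apply_zero_lt_one hf n)))

lemma recenteredStep_apply_zero (f : ℂ → ℂ) (n : ℕ) : recenteredStep f n 0 = 0 := by
  simp [recenteredStep, Function.iterate_succ_apply']

lemma forwardComp_recenteredStep_eqOn (hf : HolSelfDisk f) (n : ℕ) :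
    EqOn (forwardComp (recenteredStep f) n) (diskMobius (-f^[n] 0) ∘ f^[n]) (ball 0 1) := by
  intro z hz
  induction n with
  | zero => simp
  | succ n ih =>
    have hfz : ‖f^[n] z‖ ≤ 1 := (mem_ball_zero_iff.mp ((hf.iterate n).2 hz)).le
    simp only [forwardComp_succ, recenteredStep, Function.comp_apply] at ih ⊢
    rw [ih, diskMobius_diskMobius_neg (norm_iterate_apply_zero_lt_one hf n) hfz,
      Function.iterate_succ_apply', Function.iterate_succ_apply']

end Recentering

theorem stmt2 (f : ℂ → ℂ) (hf : HolSelfDisk f) :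
    ∃ (h : ℂ → ℂ) (γ γinv : ℕ → ℂ → ℂ),
      HolSelfDisk h ∧ (∀ n, IsDiskAutPair (γ n) (γinv n)) ∧
      TendstoLocallyUniformlyOn (fun n z => γinv n (f^[n] z)) h atTop (ball (0:ℂ) 1) := by
  obtain ⟨ρ, h, hρ, hh, hlim⟩ := exists_rotation_tendstoLocallyUniformlyOn_forwardComp
    (HolSelfDisk.recenteredStep hf) (recenteredStep_apply_zero f)
  refine ⟨h, fun n z => diskMobius (f^[n] 0) ((ρ n)⁻¹ * z),
    fun n w => ρ n * diskMobius (-f^[n] 0) w, hh,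
    fun n => isDiskAutPair_diskMobius (norm_iterate_apply_zero_lt_one hf n) (hρ n),
    hlim.congr fun n z hz => ?_⟩
  simp only [forwardComp_recenteredStep_eqOn hf n hz, Function.comp_apply]
end

section
/- Let F be a holomorphic self-map of the upper half-plane H⁺ which is parabolic with Wolff point at ∞, meaning F^n → ∞ locally uniformly and F(w_n)/w_n → 1 for every sequence {w_n} converging non-tangentially to ∞. If for some w_0 ∈ H⁺ there is a subsequence {F^{n_k}(w_0)} converging non-tangentially to ∞, then the hyperbolic step s^F is identically zero on H⁺. -/
open Complex Metric Filter Set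

/-- The upper half-plane as a subset of ℂ. -/
def UHP : Set ℂ := {w : ℂ | 0 < w.im}

/-- Poincaré distance on the upper half-plane. -/
noncomputable def pdH (w₁ w₂ : ℂ) : ℝ :=
  artanh (‖(w₂ - w₁) / (w₂ - (starRingEnd ℂ) w₁)‖)

/-- Holomorphic self-map of the upper half-plane. -/
def HolSelfUHP (F : ℂ → ℂ) : Prop :=
  DifferentiableOn ℂ F UHP ∧ MapsTo F UHP UHP

/-- A sequence in the upper half-plane converges non-tangentially to ∞. -/
def NonTangToInf (w : ℕ → ℂ) : Prop :=
  Tendsto (fun n => ‖w n‖) atTop atTop ∧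
  ∃ ε > 0, ∀ n, ε * ‖w n‖ ≤ (w n).im

/-- `F` is a parabolic holomorphic self-map of the upper half-plane with Wolff point ∞:
fixed-point-free, iterates tend to ∞ locally uniformly, and `F w / w → 1` along
sequences converging non-tangentially to ∞. -/
def ParabolicAtInf (F : ℂ → ℂ) : Prop :=
  HolSelfUHP F ∧ (∀ w ∈ UHP, F w ≠ w) ∧
  (∀ K ⊆ UHP, IsCompact K → ∀ M : ℝ,
    ∀ᶠ n in atTop, ∀ w ∈ K, M ≤ ‖F^[n] w‖) ∧
  (∀ w : ℕ → ℂ, (∀ n, w n ∈ UHP) → NonTangToInf w →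
    Tendsto (fun n => F (w n) / w n) atTop (nhds 1))

/-! By Schwarz–Pick, the pseudo-hyperbolic distance `ρ` between `F^[n k] w` and `F^[n k] w₀`
stays bounded away from `1`. A sequence at bounded hyperbolic distance from a non-tangential
sequence is non-tangential, so `F^[n k] w → ∞` non-tangentially as well, and then `F v / v → 1` along
`v k = F^[n k] w` forces `ρ(v k, F (v k)) → 0`. Again by Schwarz–Pick the steps
`ρ(F^[m] w, F^[m+1] w)` decrease in `m`, so the whole sequence of steps tends to `0`. -/

open ComplexConjugate

noncomputable def pseudoHypDist (z w : ℂ) : ℝ := ‖(w - z) / (w - conj z)‖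

lemma pdH_eq_artanh_pseudoHypDist (z w : ℂ) : pdH z w = artanh (pseudoHypDist z w) := rfl

lemma continuousAt_artanh_zero : ContinuousAt artanh 0 := by
  unfold artanh
  refine continuousAt_const.mul (ContinuousAt.comp (g := Real.log) ?_ ?_)
  · exact Real.continuousAt_log (by norm_num)
  · exact ContinuousAt.div (by fun_prop) (by fun_prop) (by norm_num)

lemma artanh_zero : artanh 0 = 0 := by simp [artanh]

lemma im_add_im_le_norm_sub_conj (z w : ℂ) : z.im + w.im ≤ ‖z - conj w‖ := by
  have h := Complex.abs_im_le_norm (z - conj w)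
  rw [Complex.sub_im, Complex.conj_im, sub_neg_eq_add] at h
  exact (le_abs_self _).trans h

lemma normSq_sub_conj_sub_normSq_sub (z w : ℂ) :
    Complex.normSq (z - conj w) - Complex.normSq (z - w) = 4 * z.im * w.im := by
  simp only [Complex.normSq_apply, Complex.sub_re, Complex.sub_im, Complex.conj_re,
    Complex.conj_im]
  ring

lemma norm_sub_conj_pos {z w : ℂ} (hz : z ∈ UHP) (hw : w ∈ UHP) : 0 < ‖z - conj w‖ :=
  (add_pos (show 0 < z.im from hz) (show 0 < w.im from hw)).trans_le
    (im_add_im_le_norm_sub_conj z w)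

lemma sub_conj_ne_zero {z w : ℂ} (hz : z ∈ UHP) (hw : w ∈ UHP) : z - conj w ≠ 0 :=
  norm_pos_iff.1 (norm_sub_conj_pos hz hw)

lemma norm_sub_lt_norm_sub_conj {z w : ℂ} (hz : z ∈ UHP) (hw : w ∈ UHP) :
    ‖z - w‖ < ‖z - conj w‖ := by
  have hz' : 0 < z.im := hz
  have hw' : 0 < w.im := hw
  have h := normSq_sub_conj_sub_normSq_sub z w
  rw [← Complex.sq_norm, ← Complex.sq_norm] at h
  exact (pow_lt_pow_iff_left₀ (norm_nonneg _) (norm_nonneg _) two_ne_zero).1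
    (by nlinarith [mul_pos hz' hw'])

lemma pseudoHypDist_lt_one {z w : ℂ} (hz : z ∈ UHP) (hw : w ∈ UHP) : pseudoHypDist z w < 1 := by
  rw [pseudoHypDist, norm_div, div_lt_one (norm_sub_conj_pos hw hz)]
  exact norm_sub_lt_norm_sub_conj hw hz

lemma norm_sub_eq_pseudoHypDist_mul {z w : ℂ} (hz : z ∈ UHP) (hw : w ∈ UHP) :
    ‖w - z‖ = pseudoHypDist z w * ‖w - conj z‖ := by
  rw [pseudoHypDist, norm_div, div_mul_cancel₀ _ (norm_sub_conj_pos hw hz).ne']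

lemma one_sub_pseudoHypDist_mul_im_le {z w : ℂ} (hz : z ∈ UHP) (hw : w ∈ UHP) :
    (1 - pseudoHypDist z w) * w.im ≤ 4 * z.im := by
  set ρ := pseudoHypDist z w
  have hz' : 0 < z.im := hz
  have hw' : 0 < w.im := hw
  have hρ0 : 0 ≤ ρ := norm_nonneg _
  have hρ1 : ρ < 1 := pseudoHypDist_lt_one hz hw
  have hd := im_add_im_le_norm_sub_conj w z
  have hid : (1 - ρ ^ 2) * ‖w - conj z‖ ^ 2 = 4 * w.im * z.im := by
    have h := normSq_sub_conj_sub_normSq_sub w z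
    rw [← Complex.sq_norm, ← Complex.sq_norm, norm_sub_eq_pseudoHypDist_mul hz hw] at h
    linarith
  have hsq : (1 - ρ) * w.im ^ 2 ≤ (1 - ρ ^ 2) * ‖w - conj z‖ ^ 2 := by
    have h1 : w.im ^ 2 ≤ ‖w - conj z‖ ^ 2 := pow_le_pow_left₀ hw'.le (by linarith) 2
    have h2 : 0 ≤ 1 - ρ ^ 2 := by nlinarith
    nlinarith [mul_le_mul_of_nonneg_left h1 h2, mul_nonneg (mul_nonneg hρ0 (by linarith : 0 ≤ 1 - ρ))
      (sq_nonneg w.im)]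
  nlinarith

lemma one_sub_pseudoHypDist_mul_norm_sub_le {z w : ℂ} (hz : z ∈ UHP) (hw : w ∈ UHP) :
    (1 - pseudoHypDist z w) * ‖w - z‖ ≤ 2 * z.im := by
  have hz' : 0 < z.im := hz
  have hρ0 : 0 ≤ pseudoHypDist z w := norm_nonneg _
  have hρ1 := pseudoHypDist_lt_one hz hw
  have hzz : ‖z - conj z‖ = 2 * z.im := by
    rw [Complex.sub_conj, norm_mul, Complex.norm_I, mul_one, Complex.norm_real,
      Real.norm_of_nonneg (by positivity)]
  have htri : ‖w - conj z‖ ≤ ‖w - z‖ + 2 * z.im := by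
    rw [← hzz, ← sub_add_sub_cancel w z (conj z)]
    exact norm_add_le _ _
  have h := norm_sub_eq_pseudoHypDist_mul hz hw
  nlinarith [norm_nonneg (w - z)]

/-- Inverse of the Cayley transform `w ↦ (w - a) / (w - conj a)` from `UHP` onto the unit disc. -/
noncomputable def cayleyInv (a ζ : ℂ) : ℂ := (a - ζ * conj a) / (1 - ζ)

lemma cayleyInv_im (a : ℂ) {ζ : ℂ} (hζ : ζ ≠ 1) :
    (cayleyInv a ζ).im = a.im * (1 - Complex.normSq ζ) / Complex.normSq (1 - ζ) := by
  have hn : Complex.normSq (1 - ζ) ≠ 0 := (Complex.normSq_pos.2 (sub_ne_zero.2 hζ.symm)).ne'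
  rw [cayleyInv, Complex.div_im]
  field_simp
  simp only [Complex.normSq_apply, Complex.sub_re, Complex.sub_im, Complex.mul_re,
    Complex.mul_im, Complex.conj_re, Complex.conj_im, Complex.one_re, Complex.one_im]
  ring

lemma ne_one_of_mem_ball {ζ : ℂ} (hζ : ζ ∈ ball (0 : ℂ) 1) : ζ ≠ 1 := by
  rintro rfl
  simp at hζ

lemma mapsTo_cayleyInv {a : ℂ} (ha : a ∈ UHP) : MapsTo (cayleyInv a) (ball 0 1) UHP := by
  intro ζ hζ
  have hζ1 : ‖ζ‖ < 1 := mem_ball_zero_iff.1 hζ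
  have hne := ne_one_of_mem_ball hζ
  show 0 < (cayleyInv a ζ).im
  rw [cayleyInv_im a hne, ← Complex.sq_norm]
  have ha' : 0 < a.im := ha
  have : 0 < 1 - ‖ζ‖ ^ 2 := by nlinarith [norm_nonneg ζ]
  exact div_pos (mul_pos ha' this) (Complex.normSq_pos.2 (sub_ne_zero.2 hne.symm))

lemma differentiableOn_cayleyInv (a : ℂ) : DifferentiableOn ℂ (cayleyInv a) (ball 0 1) :=
  DifferentiableOn.div (by fun_prop) (by fun_prop)
    fun _ hζ ↦ sub_ne_zero.2 (ne_one_of_mem_ball hζ).symm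

lemma cayleyInv_zero (a : ℂ) : cayleyInv a 0 = a := by simp [cayleyInv]

lemma cayleyInv_cayley {a w : ℂ} (ha : a ∈ UHP) (hw : w ∈ UHP) :
    cayleyInv a ((w - a) / (w - conj a)) = w := by
  have h1 := sub_conj_ne_zero hw ha
  have h2 := sub_conj_ne_zero ha ha
  have h3 : 1 - (w - a) / (w - conj a) = (a - conj a) / (w - conj a) := by
    field_simp
    ring
  rw [cayleyInv, h3, div_eq_iff (div_ne_zero h2 h1)]
  field_simp
  ring

/-- Schwarz–Pick lemma for the upper half-plane. -/
theorem HolSelfUHP.pseudoHypDist_le {F : ℂ → ℂ} (hF : HolSelfUHP F) {z w : ℂ} (hz : z ∈ UHP)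
    (hw : w ∈ UHP) : pseudoHypDist (F z) (F w) ≤ pseudoHypDist z w := by
  obtain ⟨hdiff, hmaps⟩ := hF
  set g : ℂ → ℂ := fun ζ ↦ (F (cayleyInv z ζ) - F z) / (F (cayleyInv z ζ) - conj (F z))
  have hFg : MapsTo (fun ζ ↦ F (cayleyInv z ζ)) (ball 0 1) UHP :=
    hmaps.comp (mapsTo_cayleyInv hz)
  have hg_maps : MapsTo g (ball 0 1) (closedBall 0 1) := fun ζ hζ ↦
    mem_closedBall_zero_iff.2 (pseudoHypDist_lt_one (hmaps hz) (hFg hζ)).le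
  have hg_diff : DifferentiableOn ℂ g (ball 0 1) := by
    have h := hdiff.comp (differentiableOn_cayleyInv z) (mapsTo_cayleyInv hz)
    exact (h.sub_const _).div (h.sub_const _) fun ζ hζ ↦ sub_conj_ne_zero (hFg hζ) (hmaps hz)
  have hg0 : g 0 = 0 := by simp [g, cayleyInv_zero]
  have key := Complex.norm_le_norm_of_mapsTo_ball hg_diff hg_maps hg0 (pseudoHypDist_lt_one hz hw)
  simpa only [g, cayleyInv_cayley hz hw, pseudoHypDist] using key

lemma HolSelfUHP.pseudoHypDist_iterate_le {F : ℂ → ℂ} (hF : HolSelfUHP F) (m : ℕ) {z w : ℂ}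
    (hz : z ∈ UHP) (hw : w ∈ UHP) : pseudoHypDist (F^[m] z) (F^[m] w) ≤ pseudoHypDist z w := by
  induction m with
  | zero => rfl
  | succ m ih =>
    rw [Function.iterate_succ_apply', Function.iterate_succ_apply']
    exact (hF.pseudoHypDist_le (hF.2.iterate m hz) (hF.2.iterate m hw)).trans ih

lemma NonTangToInf.of_pseudoHypDist_le {u v : ℕ → ℂ} (hu : NonTangToInf u)
    (huH : ∀ k, u k ∈ UHP) (hvH : ∀ k, v k ∈ UHP) {t : ℝ} (ht : t < 1)
    (hρ : ∀ k, pseudoHypDist (v k) (u k) ≤ t) : NonTangToInf v := by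
  obtain ⟨hinf, ε, hε, hεu⟩ := hu
  have hc : 0 < 1 - t := by linarith
  have hcρ : ∀ k, 1 - t ≤ 1 - pseudoHypDist (v k) (u k) := fun k ↦ by linarith [hρ k]
  have him : ∀ k, (1 - t) * ε * ‖u k‖ ≤ 4 * (v k).im := fun k ↦
    calc (1 - t) * ε * ‖u k‖ ≤ (1 - t) * (u k).im := by
          rw [mul_assoc]; exact mul_le_mul_of_nonneg_left (hεu k) hc.le
      _ ≤ (1 - pseudoHypDist (v k) (u k)) * (u k).im :=
          mul_le_mul_of_nonneg_right (hcρ k) (huH k).le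
      _ ≤ 4 * (v k).im := one_sub_pseudoHypDist_mul_im_le (hvH k) (huH k)
  have hsub : ∀ k, (1 - t) * ‖u k - v k‖ ≤ 2 * (v k).im := fun k ↦
    (mul_le_mul_of_nonneg_right (hcρ k) (norm_nonneg _)).trans
      (one_sub_pseudoHypDist_mul_norm_sub_le (hvH k) (huH k))
  refine ⟨?_, (1 - t) * ε / (4 + 2 * ε), by positivity, fun k ↦ ?_⟩
  · refine tendsto_atTop_mono (fun k ↦ ?_) (hinf.const_mul_atTop (by positivity : 0 < (1 - t) * ε / 4))
    linarith [him k, Complex.im_le_norm (v k)]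
  · have htri : ‖v k‖ ≤ ‖u k‖ + ‖u k - v k‖ := by
      linarith [norm_sub_norm_le (v k) (u k), norm_sub_rev (v k) (u k)]
    rw [div_mul_eq_mul_div, div_le_iff₀ (by positivity)]
    nlinarith [him k, hsub k, mul_le_mul_of_nonneg_left htri (mul_pos hc hε).le]

lemma pseudoHypDist_le_norm_div_sub_one {u v : ℂ} (hu : u ∈ UHP) (hv : v ∈ UHP) {ε : ℝ}
    (hε : 0 < ε) (hεu : ε * ‖u‖ ≤ u.im) : pseudoHypDist u v ≤ ‖v / u - 1‖ / ε := by
  have hv' : 0 < v.im := hv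
  have hu0 : u ≠ 0 := by
    rintro rfl
    simp [UHP] at hu
  have hnum : ‖v - u‖ = ‖u‖ * ‖v / u - 1‖ := by
    rw [← norm_mul, mul_sub, mul_div_cancel₀ _ hu0, mul_one]
  have hden : ε * ‖u‖ ≤ ‖v - conj u‖ :=
    hεu.trans (by linarith [im_add_im_le_norm_sub_conj v u])
  rw [pseudoHypDist, norm_div, div_le_div_iff₀ (norm_sub_conj_pos hv hu) hε, hnum]
  nlinarith [mul_le_mul_of_nonneg_left hden (norm_nonneg (v / u - 1))]

lemma tendsto_pseudoHypDist_apply_of_div_tendsto_one {F : ℂ → ℂ} (hF : MapsTo F UHP UHP)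
    {u : ℕ → ℂ} (hu : ∀ k, u k ∈ UHP) {ε : ℝ} (hε : 0 < ε) (hεu : ∀ k, ε * ‖u k‖ ≤ (u k).im)
    (hlim : Tendsto (fun k ↦ F (u k) / u k) atTop (nhds 1)) :
    Tendsto (fun k ↦ pseudoHypDist (u k) (F (u k))) atTop (nhds 0) := by
  have h : Tendsto (fun k ↦ ‖F (u k) / u k - 1‖ / ε) atTop (nhds 0) := by
    simpa using (tendsto_iff_norm_sub_tendsto_zero.1 hlim).div_const ε
  exact squeeze_zero (fun _ ↦ norm_nonneg _)
    (fun k ↦ pseudoHypDist_le_norm_div_sub_one (hu k) (hF (hu k)) hε (hεu k)) h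

lemma HolSelfUHP.antitone_pseudoHypDist_iterate_succ {F : ℂ → ℂ} (hF : HolSelfUHP F) {w : ℂ}
    (hw : w ∈ UHP) : Antitone fun m ↦ pseudoHypDist (F^[m] w) (F^[m + 1] w) :=
  antitone_nat_of_succ_le fun m ↦ by
    simpa only [Function.iterate_succ_apply'] using
      hF.pseudoHypDist_le (hF.2.iterate m hw) (hF.2.iterate (m + 1) hw)

theorem stmt12 (F : ℂ → ℂ) (hF : ParabolicAtInf F)
    (w₀ : ℂ) (hw₀ : w₀ ∈ UHP) (n : ℕ → ℕ) (hn : StrictMono n)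
    (hnt : NonTangToInf (fun k => F^[n k] w₀)) :
    ∀ w ∈ UHP, Tendsto (fun m => pdH (F^[m] w) (F^[m+1] w)) atTop (nhds 0) := by
  intro w hw
  obtain ⟨hH, -, -, hpar⟩ := hF
  have hu : ∀ k, F^[n k] w₀ ∈ UHP := fun k ↦ hH.2.iterate _ hw₀
  have hv : ∀ k, F^[n k] w ∈ UHP := fun k ↦ hH.2.iterate _ hw
  have hvnt : NonTangToInf fun k ↦ F^[n k] w :=
    hnt.of_pseudoHypDist_le hu hv (pseudoHypDist_lt_one hw hw₀)
      fun k ↦ hH.pseudoHypDist_iterate_le (n k) hw hw₀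
  obtain ⟨ε, hε, hεv⟩ := hvnt.2
  have hsub : Tendsto (fun k ↦ pseudoHypDist (F^[n k] w) (F^[n k + 1] w)) atTop (nhds 0) := by
    simpa only [Function.iterate_succ_apply'] using
      tendsto_pseudoHypDist_apply_of_div_tendsto_one hH.2 hv hε hεv (hpar _ hv hvnt)
  have hsteps : Tendsto (fun m ↦ pseudoHypDist (F^[m] w) (F^[m + 1] w)) atTop (nhds 0) :=
    (tendsto_iff_tendsto_subseq_of_antitone (hH.antitone_pseudoHypDist_iterate_succ hw)
      hn.tendsto_atTop).2 hsub
  simpa only [pdH_eq_artanh_pseudoHypDist, artanh_zero, Function.comp_def] using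
    continuousAt_artanh_zero.tendsto.comp hsteps
end
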